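/- arXiv:2412.19389 — 4 statements merged into one kernel-verified Lean document; each statement's English description precedes it below -/
import Mathlib

section
/- Let N > 2D, Γ = J(N,D) with fixed vertex x, and 0 ≤ i ≤ D. Consider the graph on Γ_i(x) where y ~ z iff y,z are adjacent in Γ and x∖y = x∖z. Then the connected components of this graph are exactly the sets {y ∈ X : y ∩ x = α} for α ⊆ x with |α| = D−i. -/
open Finset

/-- The Johnson graph `J(N,D)`, presented on the `D`-element subsets of `Ω`
(where `|Ω| = N`): two `D`-subsets are adjacent iff their intersection has
size `D - 1`. -/
def johnsonGraph (Ω : Type*) [DecidableEq Ω] (D : ℕ) :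
    SimpleGraph {s : Finset Ω // s.card = D} where
  Adj y z := y ≠ z ∧ ((y : Finset Ω) ∩ (z : Finset Ω)).card = D - 1
  symm := ⟨by rintro y z ⟨h1, h2⟩; exact ⟨h1.symm, by rwa [Finset.inter_comm]⟩⟩
  loopless := ⟨by rintro y ⟨h, -⟩; exact h rfl⟩

/-- The graph on the `i`-th subconstituent `Γ_i(x)` of the Johnson graph
obtained by keeping only the edges `y ~ z` of `J(N,D)` with `x \ y = x \ z`
(i.e. removing the edges coming from the `J(D,i)` factor). -/
def subconstituentRemoved (Ω : Type*) [DecidableEq Ω] (D i : ℕ)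
    (x : {s : Finset Ω // s.card = D}) :
    SimpleGraph {y : {s : Finset Ω // s.card = D} //
      ((x : Finset Ω) ∩ (y : Finset Ω)).card = D - i} where
  Adj y z := (johnsonGraph Ω D).Adj y.1 z.1 ∧
    (x : Finset Ω) \ (y.1 : Finset Ω) = (x : Finset Ω) \ (z.1 : Finset Ω)
  symm := ⟨by rintro y z ⟨h1, h2⟩; exact ⟨h1.symm, h2.symm⟩⟩
  loopless := ⟨by rintro y ⟨h, -⟩; exact h.ne rfl⟩


section
variable {Ω : Type*} [DecidableEq Ω]

lemma aux_reach (D i : ℕ) (x : {s : Finset Ω // s.card = D}) (n : ℕ) :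
    ∀ (y z : {y : {s : Finset Ω // s.card = D} //
      ((x : Finset Ω) ∩ (y : Finset Ω)).card = D - i}),
    (y.1.1 : Finset Ω) ∩ x.1 = z.1.1 ∩ x.1 →
    (y.1.1 \ (x.1 ∪ z.1.1)).card = n →
    (subconstituentRemoved Ω D i x).Reachable y z := by
  induction n with
  | zero =>
    intro y z hinter hcard
    have hempty : y.1.1 \ (x.1 ∪ z.1.1) = ∅ := card_eq_zero.mp hcard
    have hsub : y.1.1 ⊆ z.1.1 := by
      intro a ha
      by_cases hax : a ∈ x.1
      · have : a ∈ z.1.1 ∩ x.1 := hinter ▸ mem_inter.mpr ⟨ha, hax⟩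
        exact (mem_inter.mp this).1
      · have : a ∉ y.1.1 \ (x.1 ∪ z.1.1) := hempty ▸ notMem_empty a
        simp only [mem_sdiff, mem_union, not_and, not_not] at this
        rcases this ha with h | h
        · exact absurd h hax
        · exact h
    have heq : y.1.1 = z.1.1 :=
      eq_of_subset_of_card_le hsub (by rw [y.1.2, z.1.2])
    have : y = z := Subtype.ext (Subtype.ext heq)
    exact this ▸ SimpleGraph.Reachable.refl y
  | succ n ih =>
    intro y z hinter hcard
    obtain ⟨b, hb⟩ := card_pos.mp (by omega : 0 < (y.1.1 \ (x.1 ∪ z.1.1)).card)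
    simp only [mem_sdiff, mem_union, not_or] at hb
    obtain ⟨hby, hbx, hbz⟩ := hb
    -- find c in z \ (x ∪ y)
    have hzne : (z.1.1 \ (x.1 ∪ y.1.1)).Nonempty := by
      by_contra hemp
      rw [not_nonempty_iff_eq_empty, sdiff_eq_empty_iff_subset] at hemp
      have hsub : z.1.1 ⊆ y.1.1 := by
        intro a ha
        rcases mem_union.mp (hemp ha) with hax | hay
        · have : a ∈ y.1.1 ∩ x.1 := hinter ▸ mem_inter.mpr ⟨ha, hax⟩
          exact (mem_inter.mp this).1
        · exact hay
      have : z.1.1 = y.1.1 := eq_of_subset_of_card_le hsub (by rw [y.1.2, z.1.2])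
      rw [← this] at hby
      exact hbz hby
    obtain ⟨c, hc⟩ := hzne
    simp only [mem_sdiff, mem_union, not_or] at hc
    obtain ⟨hcz, hcx, hcy⟩ := hc
    -- build y'
    set s : Finset Ω := insert c (y.1.1.erase b) with hs
    have hDpos : 0 < y.1.1.card := card_pos.mpr ⟨b, hby⟩
    have hscard : s.card = D := by
      rw [hs, card_insert_of_notMem (fun h => hcy (mem_of_mem_erase h)),
        card_erase_of_mem hby, y.1.2]
      have := y.1.2 ▸ hDpos
      omega
    have hsx : s ∩ x.1 = y.1.1 ∩ x.1 := by
      ext a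
      simp only [hs, mem_inter, mem_insert, mem_erase]
      constructor
      · rintro ⟨hc1 | ⟨-, h⟩, h2⟩
        · exact absurd (hc1 ▸ h2) hcx
        · exact ⟨h, h2⟩
      · rintro ⟨h1, h2⟩
        exact ⟨Or.inr ⟨fun h => hbx (h ▸ h2), h1⟩, h2⟩
    have hxs : (x.1 ∩ s).card = D - i := by
      rw [inter_comm, hsx, inter_comm, y.2]
    set y' : {y : {s : Finset Ω // s.card = D} //
        ((x : Finset Ω) ∩ (y : Finset Ω)).card = D - i} := ⟨⟨s, hscard⟩, hxs⟩ with hy'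
    have hadj : (subconstituentRemoved Ω D i x).Adj y y' := by
      refine ⟨⟨?_, ?_⟩, ?_⟩
      · intro h
        have : c ∈ y.1.1 := by
          rw [show y.1 = y'.1.1 from congrArg Subtype.val h]
          exact mem_insert_self c _
        exact hcy this
      · have : y.1.1 ∩ s = y.1.1.erase b := by
          ext a
          simp only [hs, mem_inter, mem_insert, mem_erase]
          constructor
          · rintro ⟨h1, hc1 | h2⟩
            · exact absurd (hc1 ▸ h1) hcy
            · exact h2
          · rintro ⟨h1, h2⟩
            exact ⟨h2, Or.inr ⟨h1, h2⟩⟩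
        show (y.1.1 ∩ y'.1.1).card = D - 1
        rw [show y'.1.1 = s from rfl, this, card_erase_of_mem hby, y.1.2]
      · show x.1 \ y.1.1 = x.1 \ y'.1.1
        have h1 : x.1 \ (x.1 ∩ y.1.1) = x.1 \ y.1.1 := sdiff_inter_self_left x.1 y.1.1
        have h2 : x.1 \ (x.1 ∩ s) = x.1 \ s := sdiff_inter_self_left x.1 s
        rw [← h1, ← h2, inter_comm x.1 y.1.1, inter_comm x.1 s, hsx]
    have hmeas : y'.1.1 \ (x.1 ∪ z.1.1) = (y.1.1 \ (x.1 ∪ z.1.1)).erase b := by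
      ext a
      simp only [hs, show y'.1.1 = s from rfl, mem_sdiff, mem_union, mem_insert,
        mem_erase, not_or]
      constructor
      · rintro ⟨hc1 | ⟨h1, h2⟩, h3, h4⟩
        · exact absurd (hc1 ▸ hcz) h4
        · exact ⟨h1, h2, h3, h4⟩
      · rintro ⟨h1, h2, h3, h4⟩
        exact ⟨Or.inr ⟨h1, h2⟩, h3, h4⟩
    have hmc : (y'.1.1 \ (x.1 ∪ z.1.1)).card = n := by
      rw [hmeas, card_erase_of_mem (by simp [mem_sdiff, hby, hbx, hbz]), hcard]
      omega
    have hiy' : y'.1.1 ∩ x.1 = z.1.1 ∩ x.1 := by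
      rw [show y'.1.1 = s from rfl, hsx, hinter]
    exact (hadj.reachable).trans (ih y' z hiy' hmc)

end

theorem stmt4 (N D i : ℕ) (hND : N > 2 * D) (hi : i ≤ D)
    (Ω : Type*) [Fintype Ω] [DecidableEq Ω] (hΩ : Fintype.card Ω = N)
    (x : {s : Finset Ω // s.card = D}) :
    (∀ y z, (subconstituentRemoved Ω D i x).Reachable y z ↔
        (y.1 : Finset Ω) ∩ (x : Finset Ω) = (z.1 : Finset Ω) ∩ (x : Finset Ω)) ∧
    (∀ α : Finset Ω, α ⊆ (x : Finset Ω) → α.card = D - i →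
      ∃ y : {y : {s : Finset Ω // s.card = D} //
              ((x : Finset Ω) ∩ (y : Finset Ω)).card = D - i},
        (y.1 : Finset Ω) ∩ (x : Finset Ω) = α) := by
  constructor
  · intro y z
    constructor
    · rintro ⟨w⟩
      induction w with
      | nil => rfl
      | cons h _ ihw =>
        rename_i u v _ _
        obtain ⟨-, hxd⟩ := h
        have : (x : Finset Ω) ∩ (u.1 : Finset Ω) = (x : Finset Ω) ∩ (v.1 : Finset Ω) := by
          rw [← sdiff_sdiff_self_left (x : Finset Ω) (u.1 : Finset Ω),
            ← sdiff_sdiff_self_left (x : Finset Ω) (v.1 : Finset Ω), hxd]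
        rw [inter_comm (u.1 : Finset Ω), this, inter_comm]
        exact ihw
    · intro h
      exact aux_reach D i x _ y z h rfl
  · intro α hα hαcard
    have hcompl : i ≤ ((x : Finset Ω)ᶜ).card := by
      rw [card_compl, x.2, hΩ]; omega
    obtain ⟨B, hBsub, hBcard⟩ := Finset.exists_subset_card_eq hcompl
    have hdisj : Disjoint α B := by
      refine disjoint_left.mpr fun a ha hb => ?_
      exact (mem_compl.mp (hBsub hb)) (hα ha)
    have hint : (α ∪ B) ∩ (x : Finset Ω) = α := by
      ext a
      simp only [mem_inter, mem_union]
      constructor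
      · rintro ⟨hA | hB, hx⟩
        · exact hA
        · exact absurd hx (mem_compl.mp (hBsub hB))
      · intro ha; exact ⟨Or.inl ha, hα ha⟩
    have hcard : (α ∪ B).card = D := by
      rw [card_union_of_disjoint hdisj, hαcard, hBcard]; omega
    refine ⟨⟨⟨α ∪ B, hcard⟩, ?_⟩, hint⟩
    show ((x : Finset Ω) ∩ (α ∪ B)).card = D - i
    rw [inter_comm, hint, hαcard]
end

section
/- Let A be the adjacency matrix of J(N,D) with N > 2D, acting on C^X, and for α ⊆ x let α^∨ = Σ_{y ⊇ α} ŷ. Then A α^∨ = θ_{|α|} α^∨ + (D−|α|+1) Σ_{β ⊆ α, |β|=|α|−1} β^∨, where θ_j = (D−j)(N−D−j) − j. -/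
open Finset

/-- For `α ⊆ x`, the vector `α^∨ ∈ ℂ^X`: the characteristic vector of the set
of vertices of `J(N,D)` that contain `α`. -/
def vee (Ω : Type*) [DecidableEq Ω] (D : ℕ) (α : Finset Ω) :
    {s : Finset Ω // s.card = D} → ℂ :=
  fun y => if α ⊆ (y : Finset Ω) then 1 else 0

/-- For `α ⊆ x`, the vector `α^N ∈ ℂ^X`: the characteristic vector of the set
of vertices `y` of `J(N,D)` with `y ∩ x = α`. -/
def nvec {Ω : Type*} [DecidableEq Ω] {D : ℕ} (x : {s : Finset Ω // s.card = D})
    (α : Finset Ω) : {s : Finset Ω // s.card = D} → ℂ :=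
  fun y => if (y : Finset Ω) ∩ (x : Finset Ω) = α then 1 else 0

instance {Ω : Type*} [DecidableEq Ω] {D : ℕ} :
    DecidableRel (johnsonGraph Ω D).Adj :=
  fun y z => inferInstanceAs
    (Decidable (y ≠ z ∧ ((y : Finset Ω) ∩ (z : Finset Ω)).card = D - 1))

/-- The adjacency operator of the Johnson graph `J(N,D)` acting on `ℂ^X`. -/
noncomputable def adjOp (Ω : Type*) [Fintype Ω] [DecidableEq Ω] (D : ℕ)
    (f : {s : Finset Ω // s.card = D} → ℂ) :
    {s : Finset Ω // s.card = D} → ℂ :=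
  fun y => ∑ z : {s : Finset Ω // s.card = D},
    if (johnsonGraph Ω D).Adj y z then f z else 0

section Aux
variable {Ω : Type*} [Fintype Ω] [DecidableEq Ω] {D : ℕ}

lemma insert_erase_card {Y : Finset Ω} (hYD : Y.card = D) {a b : Ω}
    (ha : a ∈ Y) (hb : b ∉ Y) : (insert b (Y.erase a)).card = D := by
  have hbe : b ∉ Y.erase a := fun h => hb (mem_of_mem_erase h)
  have h1 : 0 < Y.card := card_pos.mpr ⟨a, ha⟩
  rw [card_insert_of_notMem hbe, card_erase_of_mem ha]
  omega

lemma adj_count (α : Finset Ω) (y : {s : Finset Ω // s.card = D}) :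
    (univ.filter fun z : {s : Finset Ω // s.card = D} =>
        (johnsonGraph Ω D).Adj y z ∧ α ⊆ (z : Finset Ω)).card
    = (((y : Finset Ω) ×ˢ ((y : Finset Ω))ᶜ).filter
        (fun p => α ⊆ insert p.2 (((y : Finset Ω)).erase p.1))).card := by
  set Y := (y : Finset Ω) with hY
  have hYD : Y.card = D := y.2
  symm
  apply Finset.card_bij (fun (p : Ω × Ω) hp =>
    (⟨insert p.2 (Y.erase p.1), by
      simp only [mem_filter, mem_product, mem_compl] at hp
      exact insert_erase_card hYD hp.1.1 hp.1.2⟩ : {s : Finset Ω // s.card = D}))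
  · rintro ⟨a, b⟩ hp
    simp only [mem_filter, mem_product, mem_compl] at hp
    obtain ⟨⟨ha, hb⟩, hcond⟩ := hp
    simp only [mem_filter, mem_univ, true_and]
    have hYint : Y ∩ insert b (Y.erase a) = Y.erase a := by
      ext c
      simp only [mem_inter, mem_insert, mem_erase]
      constructor
      · rintro ⟨hcY, hc⟩
        rcases hc with rfl | hc
        · exact absurd hcY hb
        · exact hc
      · rintro ⟨hca, hcY⟩
        exact ⟨hcY, Or.inr ⟨hca, hcY⟩⟩
    refine ⟨⟨?_, ?_⟩, hcond⟩
    · intro h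
      apply hb
      have : Y = insert b (Y.erase a) := congrArg Subtype.val h
      rw [this]; exact mem_insert_self _ _
    · show (Y ∩ insert b (Y.erase a)).card = D - 1
      rw [hYint, card_erase_of_mem ha, hYD]
  · rintro ⟨a, b⟩ hp ⟨a', b'⟩ hp' heq
    simp only [mem_filter, mem_product, mem_compl] at hp hp'
    obtain ⟨⟨ha, hb⟩, -⟩ := hp
    obtain ⟨⟨ha', hb'⟩, -⟩ := hp'
    have hset : insert b (Y.erase a) = insert b' (Y.erase a') :=
      congrArg Subtype.val heq
    have hbb : b = b' := by
      have : b ∈ insert b' (Y.erase a') := hset ▸ mem_insert_self b _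
      rcases mem_insert.mp this with h | h
      · exact h
      · exact absurd (mem_of_mem_erase h) hb
    have haa : a = a' := by
      by_contra hne
      have h1 : a ∉ insert b (Y.erase a) := by
        simp only [mem_insert, mem_erase]
        rintro (rfl | ⟨h, -⟩)
        · exact hb ha
        · exact h rfl
      have h2 : a ∈ insert b' (Y.erase a') :=
        mem_insert_of_mem (mem_erase.mpr ⟨hne, ha⟩)
      rw [hset] at h1
      exact h1 h2
    simp [hbb, haa]
  · intro z hz
    simp only [mem_filter, mem_univ, true_and] at hz
    obtain ⟨⟨hne, hcard⟩, hαz⟩ := hz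
    set Z := (z : Finset Ω) with hZ
    have hZD : Z.card = D := z.2
    have hcard' : (Y ∩ Z).card = D - 1 := hcard
    have hD1 : 1 ≤ D := by
      by_contra h
      have hD0 : D = 0 := by omega
      apply hne
      apply Subtype.ext
      show Y = Z
      have h1 : Y = ∅ := Finset.card_eq_zero.mp (by omega)
      have h2 : Z = ∅ := Finset.card_eq_zero.mp (by omega)
      rw [h1, h2]
    have hYZ : (Y \ Z).card = 1 := by
      have := card_sdiff_add_card_inter Y Z
      omega
    have hZY : (Z \ Y).card = 1 := by
      have h1 := card_sdiff_add_card_inter Z Y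
      rw [inter_comm] at h1
      omega
    obtain ⟨a, haYZ⟩ := card_eq_one.mp hYZ
    obtain ⟨b, hbZY⟩ := card_eq_one.mp hZY
    have ha : a ∈ Y ∧ a ∉ Z := by
      have : a ∈ Y \ Z := haYZ ▸ mem_singleton_self a
      exact ⟨(mem_sdiff.mp this).1, (mem_sdiff.mp this).2⟩
    have hb : b ∈ Z ∧ b ∉ Y := by
      have : b ∈ Z \ Y := hbZY ▸ mem_singleton_self b
      exact ⟨(mem_sdiff.mp this).1, (mem_sdiff.mp this).2⟩
    have hZeq : Z = insert b (Y.erase a) := by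
      symm
      apply eq_of_subset_of_card_le
      · intro c hc
        rcases mem_insert.mp hc with rfl | hc
        · exact hb.1
        · obtain ⟨hca, hcY⟩ := mem_erase.mp hc
          by_contra hcZ
          have : c ∈ Y \ Z := mem_sdiff.mpr ⟨hcY, hcZ⟩
          rw [haYZ] at this
          exact hca (mem_singleton.mp this)
      · rw [hZD, insert_erase_card hYD ha.1 hb.2]
    refine ⟨(a, b), ?_, ?_⟩
    · simp only [mem_filter, mem_product, mem_compl]
      refine ⟨⟨ha.1, hb.2⟩, ?_⟩
      rw [← hZeq]; exact hαz
    · exact Subtype.ext hZeq.symm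

lemma card_codim_one (α : Finset Ω) :
    (α.powerset.filter (fun β => β.card + 1 = α.card)).card = α.card := by
  symm
  apply Finset.card_bij (fun a _ => α.erase a)
  · intro a ha
    simp only [mem_filter, mem_powerset]
    refine ⟨erase_subset _ _, ?_⟩
    have h0 : 0 < α.card := card_pos.mpr ⟨a, ha⟩
    rw [card_erase_of_mem ha]; omega
  · intro a ha a' ha' heq
    by_contra hne
    have : a ∈ α.erase a' := mem_erase.mpr ⟨hne, ha⟩
    rw [← heq] at this
    exact (mem_erase.mp this).1 rfl
  · intro β hβ
    simp only [mem_filter, mem_powerset] at hβ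
    obtain ⟨hβα, hcard⟩ := hβ
    have : (α \ β).card = 1 := by
      have := card_sdiff_add_card_inter α β
      rw [inter_eq_right.mpr hβα] at this
      omega
    obtain ⟨a, hA⟩ := card_eq_one.mp this
    have haα : a ∈ α ∧ a ∉ β := by
      have : a ∈ α \ β := hA ▸ mem_singleton_self a
      exact ⟨(mem_sdiff.mp this).1, (mem_sdiff.mp this).2⟩
    refine ⟨a, haα.1, ?_⟩
    apply eq_of_subset_of_card_le
    · intro c hc
      obtain ⟨hca, hcα⟩ := mem_erase.mp hc
      by_contra hcβ
      have : c ∈ α \ β := mem_sdiff.mpr ⟨hcα, hcβ⟩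
      rw [hA] at this
      exact hca (mem_singleton.mp this)
    · rw [card_erase_of_mem haα.1]; omega

end Aux

theorem stmt11 (N D : ℕ) (hND : N > 2 * D)
    (Ω : Type*) [Fintype Ω] [DecidableEq Ω] (hΩ : Fintype.card Ω = N)
    (x : {s : Finset Ω // s.card = D}) (α : Finset Ω) (hα : α ⊆ (x : Finset Ω)) :
    adjOp Ω D (vee Ω D α) =
      (((D : ℂ) - α.card) * ((N : ℂ) - D - α.card) - α.card) • vee Ω D α +
      ((D - α.card + 1 : ℕ) : ℂ) •
        ∑ β ∈ α.powerset.filter (fun β => β.card + 1 = α.card), vee Ω D β := by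
  have hjD : α.card ≤ D := x.2 ▸ card_le_card hα
  have hDN : D ≤ N := by rw [← hΩ, ← x.2]; exact card_le_univ _
  funext y
  set Y := (y : Finset Ω) with hY
  have hYD : Y.card = D := y.2
  -- LHS as a cardinality
  have hLHS : adjOp Ω D (vee Ω D α) y
      = (((Y ×ˢ Yᶜ).filter (fun p => α ⊆ insert p.2 (Y.erase p.1))).card : ℂ) := by
    rw [← adj_count α y]
    rw [adjOp]
    rw [← Finset.sum_boole]
    apply Finset.sum_congr rfl
    intro z _
    simp only [vee]
    split_ifs with h1 h2 h3 h4 <;> first | rfl | tauto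
  -- RHS β-sum as a cardinality
  have hRHSsum : (∑ β ∈ α.powerset.filter (fun β => β.card + 1 = α.card), vee Ω D β) y
      = (((α.powerset.filter (fun β => β.card + 1 = α.card)).filter
          (fun β => β ⊆ Y)).card : ℂ) := by
    rw [Finset.sum_apply, ← Finset.sum_boole]
    apply Finset.sum_congr rfl
    intro β _
    rfl
  simp only [Pi.add_apply, Pi.smul_apply, smul_eq_mul]
  rw [hLHS, hRHSsum]
  by_cases hsub : α ⊆ Y
  · -- α ⊆ y
    have hT : (Y ×ˢ Yᶜ).filter (fun p => α ⊆ insert p.2 (Y.erase p.1))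
        = (Y \ α) ×ˢ Yᶜ := by
      ext ⟨a, b⟩
      simp only [mem_filter, mem_product, mem_sdiff, mem_compl]
      constructor
      · rintro ⟨⟨ha, hb⟩, hcond⟩
        refine ⟨⟨ha, fun haα => ?_⟩, hb⟩
        have h := hcond haα
        rcases mem_insert.mp h with rfl | h
        · exact hb ha
        · exact (mem_erase.mp h).1 rfl
      · rintro ⟨⟨ha, haα⟩, hb⟩
        refine ⟨⟨ha, hb⟩, fun c hc => ?_⟩
        have hcY := hsub hc
        have hca : c ≠ a := fun h => haα (h ▸ hc)
        exact mem_insert_of_mem (mem_erase.mpr ⟨hca, hcY⟩)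
    have hF : (α.powerset.filter (fun β => β.card + 1 = α.card)).filter
        (fun β => β ⊆ Y) = α.powerset.filter (fun β => β.card + 1 = α.card) := by
      apply Finset.filter_true_of_mem
      intro β hβ
      exact (mem_powerset.mp (mem_filter.mp hβ).1).trans hsub
    rw [hT, hF, card_codim_one, card_product, card_sdiff_of_subset hsub, hYD, card_compl, hΩ, hYD]
    rw [vee, if_pos hsub]
    push_cast [Nat.cast_sub hjD, Nat.cast_sub hDN]
    ring
  · by_cases hone : (α \ Y).card = 1
    · -- exactly one element of α missing from y
      obtain ⟨b₀, hb₀⟩ := card_eq_one.mp hone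
      have hb₀m : b₀ ∈ α ∧ b₀ ∉ Y := by
        have : b₀ ∈ α \ Y := hb₀ ▸ mem_singleton_self b₀
        exact ⟨(mem_sdiff.mp this).1, (mem_sdiff.mp this).2⟩
      have hj1 : 1 ≤ α.card := card_pos.mpr ⟨b₀, hb₀m.1⟩
      have hαY : (α ∩ Y).card = α.card - 1 := by
        have := card_sdiff_add_card_inter α Y
        omega
      have hT : (Y ×ˢ Yᶜ).filter (fun p => α ⊆ insert p.2 (Y.erase p.1))
          = (Y \ α) ×ˢ {b₀} := by
        ext ⟨a, b⟩
        simp only [mem_filter, mem_product, mem_sdiff, mem_compl, mem_singleton]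
        constructor
        · rintro ⟨⟨ha, hb⟩, hcond⟩
          have hbb : b = b₀ := by
            have h := hcond hb₀m.1
            rcases mem_insert.mp h with h | h
            · exact h.symm
            · exact absurd (mem_of_mem_erase h) hb₀m.2
          refine ⟨⟨ha, fun haα => ?_⟩, hbb⟩
          have h := hcond haα
          rcases mem_insert.mp h with rfl | h
          · exact hb ha
          · exact (mem_erase.mp h).1 rfl
        · rintro ⟨⟨ha, haα⟩, rfl⟩
          refine ⟨⟨ha, hb₀m.2⟩, fun c hc => ?_⟩
          by_cases hcY : c ∈ Y
          · have hca : c ≠ a := fun h => haα (h ▸ hc)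
            exact mem_insert_of_mem (mem_erase.mpr ⟨hca, hcY⟩)
          · have : c ∈ α \ Y := mem_sdiff.mpr ⟨hc, hcY⟩
            rw [hb₀] at this
            exact mem_singleton.mp this ▸ mem_insert_self _ _
      have hF : (α.powerset.filter (fun β => β.card + 1 = α.card)).filter
          (fun β => β ⊆ Y) = {α ∩ Y} := by
        ext β
        simp only [mem_filter, mem_powerset, mem_singleton]
        constructor
        · rintro ⟨⟨hβα, hβcard⟩, hβY⟩
          apply eq_of_subset_of_card_le
          · exact subset_inter hβα hβY
          · rw [hαY]; omega
        · rintro rfl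
          exact ⟨⟨inter_subset_left, by omega⟩, inter_subset_right⟩
      have hYα : (Y \ α).card = D - α.card + 1 := by
        have h1 := card_sdiff_add_card_inter Y α
        rw [inter_comm] at h1
        omega
      rw [hT, hF, card_product, hYα, card_singleton]
      rw [vee, if_neg (fun h => hb₀m.2 (h hb₀m.1))]
      rw [Finset.card_singleton]
      push_cast
      ring
    · -- at least two elements of α missing from y
      have h2 : 2 ≤ (α \ Y).card := by
        have : (α \ Y).card ≠ 0 := fun h =>
          hsub (sdiff_eq_empty_iff_subset.mp (card_eq_zero.mp h))
        omega
      have hT : (Y ×ˢ Yᶜ).filter (fun p => α ⊆ insert p.2 (Y.erase p.1)) = ∅ := by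
        rw [Finset.filter_eq_empty_iff]
        rintro ⟨a, b⟩ hp hcond
        have hsing : α \ Y ⊆ {b} := by
          intro c hc
          obtain ⟨hcα, hcY⟩ := mem_sdiff.mp hc
          have h := hcond hcα
          rcases mem_insert.mp h with rfl | h
          · exact mem_singleton_self _
          · exact absurd (mem_of_mem_erase h) hcY
        have := card_le_card hsing
        simp only [card_singleton] at this
        omega
      have hF : (α.powerset.filter (fun β => β.card + 1 = α.card)).filter
          (fun β => β ⊆ Y) = ∅ := by
        rw [Finset.filter_eq_empty_iff]
        rintro β hβ hβY
        obtain ⟨hβα, hβcard⟩ := mem_filter.mp hβ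
        rw [mem_powerset] at hβα
        have hsub2 : β ⊆ α ∩ Y := subset_inter hβα hβY
        have hc1 := card_le_card hsub2
        have hc2 := card_sdiff_add_card_inter α Y
        omega
      rw [hT, hF, vee, if_neg hsub]
      simp
end

section
/- Let N > 2D ≥ 2, x a fixed vertex of J(N,D), and A* the diagonal dual adjacency matrix with (y,y)-entry θ*_{D−|x∩y|} where θ*_i = N−1 − iN(N−1)/(D(N−D)). For α ⊆ x, A* α^∨ = θ*_{D−|α|} α^∨ + (N(N−1)/(D(N−D))) · Σ_{α⊆γ⊆x, |γ|=|α|+1} γ^∨. -/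
open Finset

/-- The dual eigenvalue `θ*_i = N - 1 - i N (N-1) / (D (N-D))` of `J(N,D)`. -/
noncomputable def thetaStar (N D i : ℕ) : ℂ :=
  ((N : ℂ) - 1) - (i : ℂ) * (N : ℂ) * ((N : ℂ) - 1) / ((D : ℂ) * ((N : ℂ) - (D : ℂ)))

/-- The dual adjacency matrix `A* = A*(x)` of `J(N,D)`: diagonal with
`(y,y)`-entry `θ*_{D - |x ∩ y|}`. -/
noncomputable def AstarOp (N : ℕ) {Ω : Type*} [DecidableEq Ω] {D : ℕ}
    (x : {s : Finset Ω // s.card = D})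
    (f : {s : Finset Ω // s.card = D} → ℂ) :
    {s : Finset Ω // s.card = D} → ℂ :=
  fun y => thetaStar N D (D - ((x : Finset Ω) ∩ (y : Finset Ω)).card) * f y

theorem stmt13 (N D : ℕ) (hND : N > 2 * D) (hD : 2 * D ≥ 2)
    (Ω : Type*) [Fintype Ω] [DecidableEq Ω] (hΩ : Fintype.card Ω = N)
    (x : {s : Finset Ω // s.card = D}) (α : Finset Ω) (hα : α ⊆ (x : Finset Ω)) :
    AstarOp N x (vee Ω D α) =
      thetaStar N D (D - α.card) • vee Ω D α +
      ((N : ℂ) * ((N : ℂ) - 1) / ((D : ℂ) * ((N : ℂ) - (D : ℂ)))) •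
        ∑ γ ∈ (x : Finset Ω).powerset.filter
            (fun γ => α ⊆ γ ∧ γ.card = α.card + 1), vee Ω D γ := by
  funext y
  simp only [AstarOp, vee, Pi.add_apply, Pi.smul_apply, Finset.sum_apply, smul_eq_mul]
  by_cases hαy : α ⊆ (y : Finset Ω)
  · simp only [hαy, if_true, mul_one]
    have hαxy : α ⊆ (x : Finset Ω) ∩ (y : Finset Ω) := Finset.subset_inter hα hαy
    have hsum : (∑ γ ∈ (x : Finset Ω).powerset.filter
        (fun γ => α ⊆ γ ∧ γ.card = α.card + 1),
        (if γ ⊆ (y : Finset Ω) then (1 : ℂ) else 0))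
        = ((((x : Finset Ω) ∩ (y : Finset Ω)) \ α).card : ℂ) := by
      rw [Finset.sum_boole]
      congr 1
      rw [Finset.filter_filter]
      refine (Finset.card_bij (fun t _ => insert t α) ?_ ?_ ?_).symm
      · rintro t ht
        simp only [Finset.mem_sdiff, Finset.mem_inter] at ht
        obtain ⟨⟨htx, hty⟩, htα⟩ := ht
        simp only [Finset.mem_filter, Finset.mem_powerset]
        exact ⟨Finset.insert_subset htx hα, ⟨Finset.subset_insert _ _,
          Finset.card_insert_of_notMem htα⟩, Finset.insert_subset hty hαy⟩
      · rintro s hs t ht hst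
        simp only [Finset.mem_sdiff, Finset.mem_inter] at hs ht
        have hst' : insert s α = insert t α := hst
        have : s ∈ insert t α := hst' ▸ Finset.mem_insert_self s α
        rcases Finset.mem_insert.mp this with h | h
        · exact h
        · exact absurd h hs.2
      · rintro γ hγ
        simp only [Finset.mem_filter, Finset.mem_powerset] at hγ
        obtain ⟨hγx, ⟨hαγ, hcard⟩, hγy⟩ := hγ
        have h1 : (γ \ α).card = 1 := by
          rw [Finset.card_sdiff_of_subset hαγ, hcard]; omega
        obtain ⟨t, htdef⟩ := Finset.card_eq_one.mp h1
        have htγ : t ∈ γ := (Finset.mem_sdiff.mp (htdef ▸ Finset.mem_singleton_self t)).1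
        have htα : t ∉ α := (Finset.mem_sdiff.mp (htdef ▸ Finset.mem_singleton_self t)).2
        refine ⟨t, ?_, ?_⟩
        · simp only [Finset.mem_sdiff, Finset.mem_inter]
          exact ⟨⟨hγx htγ, hγy htγ⟩, htα⟩
        · apply Finset.Subset.antisymm
          · exact Finset.insert_subset htγ hαγ
          · intro u hu
            by_cases huα : u ∈ α
            · exact Finset.mem_insert_of_mem (huα)
            · have : u ∈ γ \ α := Finset.mem_sdiff.mpr ⟨hu, huα⟩
              rw [htdef, Finset.mem_singleton] at this
              exact this ▸ Finset.mem_insert_self u α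
    rw [hsum]
    have hk : ((x : Finset Ω) ∩ (y : Finset Ω)).card ≤ D := by
      have := Finset.card_le_card (Finset.inter_subset_left (s₁ := (x:Finset Ω)) (s₂ := (y:Finset Ω)))
      rwa [x.2] at this
    have ha : α.card ≤ ((x : Finset Ω) ∩ (y : Finset Ω)).card := Finset.card_le_card hαxy
    rw [Finset.card_sdiff_of_subset hαxy]
    simp only [thetaStar]
    rw [Nat.cast_sub hk, Nat.cast_sub (ha.trans hk), Nat.cast_sub ha]
    ring
  · simp only [hαy, if_false, mul_zero, zero_add]
    rw [Finset.sum_eq_zero, mul_zero]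
    rintro γ hγ
    simp only [Finset.mem_filter, Finset.mem_powerset] at hγ
    rw [if_neg]
    intro hγy
    exact hαy (hγ.2.1.trans hγy)
end

section
/- Let N > 2D, Γ = J(N,D), x a fixed vertex, and A the adjacency matrix with eigenvalues θ_j = (D−j)(N−D−j) − j for 0 ≤ j ≤ D. For α ⊆ x, the vector α^∨ satisfies (A − θ_0 I)(A − θ_1 I)···(A − θ_{|α|} I) α^∨ = 0; equivalently, α^∨ lies in the sum of the eigenspaces of A for the eigenvalues θ_0, …, θ_{|α|}. -/
open Finset

/-- The eigenvalue `θ_j = (D-j)(N-D-j) - j` of the Johnson graph `J(N,D)`. -/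
def theta (N D j : ℕ) : ℂ :=
  ((D : ℂ) - (j : ℂ)) * ((N : ℂ) - (D : ℂ) - (j : ℂ)) - (j : ℂ)

/-- `annihProd Ω N D k f = (A - θ_0 I)(A - θ_1 I) ⋯ (A - θ_{k-1} I) f`. -/
noncomputable def annihProd (Ω : Type*) [Fintype Ω] [DecidableEq Ω] (N D : ℕ) :
    ℕ → ({s : Finset Ω // s.card = D} → ℂ) → ({s : Finset Ω // s.card = D} → ℂ)
  | 0, f => f
  | (k + 1), f => annihProd Ω N D k (adjOp Ω D f - theta N D k • f)

section Aux

variable {Ω : Type*} [Fintype Ω] [DecidableEq Ω]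

/-- Linearity of the adjacency operator: scalar multiples. -/
lemma adjOp_smul (D : ℕ) (c : ℂ) (f : {s : Finset Ω // s.card = D} → ℂ) :
    adjOp Ω D (c • f) = c • adjOp Ω D f := by
  funext y
  simp only [adjOp, Pi.smul_apply, smul_eq_mul, Finset.mul_sum]
  exact Finset.sum_congr rfl fun z _ => by by_cases h : (johnsonGraph Ω D).Adj y z <;> simp [h]

/-- Linearity of the adjacency operator: sums. -/
lemma adjOp_add (D : ℕ) (f g : {s : Finset Ω // s.card = D} → ℂ) :
    adjOp Ω D (f + g) = adjOp Ω D f + adjOp Ω D g := by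
  funext y
  simp only [adjOp, Pi.add_apply, ← Finset.sum_add_distrib]
  exact Finset.sum_congr rfl fun z _ => by by_cases h : (johnsonGraph Ω D).Adj y z <;> simp [h]

lemma annihProd_smul (N D k : ℕ) (c : ℂ) (f : {s : Finset Ω // s.card = D} → ℂ) :
    annihProd Ω N D k (c • f) = c • annihProd Ω N D k f := by
  induction k generalizing f with
  | zero => rfl
  | succ k ih =>
    show annihProd Ω N D k _ = c • annihProd Ω N D k _
    rw [← ih]
    rw [adjOp_smul, smul_sub, smul_comm]

lemma annihProd_add (N D k : ℕ) (f g : {s : Finset Ω // s.card = D} → ℂ) :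
    annihProd Ω N D k (f + g) = annihProd Ω N D k f + annihProd Ω N D k g := by
  induction k generalizing f g with
  | zero => rfl
  | succ k ih =>
    show annihProd Ω N D k _ = annihProd Ω N D k _ + annihProd Ω N D k _
    rw [← ih]
    rw [adjOp_add, smul_add]
    abel

lemma annihProd_zero (N D k : ℕ) :
    annihProd Ω N D k (0 : {s : Finset Ω // s.card = D} → ℂ) = 0 := by
  have := annihProd_smul (Ω := Ω) N D k 0 (0 : {s : Finset Ω // s.card = D} → ℂ)
  simpa using this

lemma annihProd_sum {ι : Type*} (N D k : ℕ) (s : Finset ι)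
    (g : ι → ({s : Finset Ω // s.card = D} → ℂ)) :
    annihProd Ω N D k (∑ i ∈ s, g i) = ∑ i ∈ s, annihProd Ω N D k (g i) := by
  classical
  induction s using Finset.induction with
  | empty => simpa using annihProd_zero (Ω := Ω) N D k
  | insert _ _ hnot ih =>
    rw [Finset.sum_insert hnot, Finset.sum_insert hnot, annihProd_add, ih]

/-- Counting lemma: `(A α^∨)(y) = |y \ α| · |{v ∉ y : α \ y ⊆ {v}}|`. -/
lemma adjOp_vee_apply (D : ℕ) (α : Finset Ω) (y : {s : Finset Ω // s.card = D}) :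
    adjOp Ω D (vee Ω D α) y =
      ((((y : Finset Ω) \ α).card : ℂ) *
        (((Finset.univ.filter fun v : Ω =>
            v ∉ (y : Finset Ω) ∧ α \ (y : Finset Ω) ⊆ {v}).card : ℂ))) := by
  classical
  set Y := (y : Finset Ω) with hYdef
  have hY : Y.card = D := y.2
  set V := Finset.univ.filter fun v : Ω => v ∉ Y ∧ α \ Y ⊆ {v} with hVdef
  have hVmem : ∀ v : Ω, v ∈ V ↔ v ∉ Y ∧ α \ Y ⊆ {v} := by
    intro v; simp [hVdef]
  have step1 : adjOp Ω D (vee Ω D α) y =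
      (((Finset.univ.filter fun z : {s : Finset Ω // s.card = D} =>
          (johnsonGraph Ω D).Adj y z ∧ α ⊆ (z : Finset Ω)).card : ℕ) : ℂ) := by
    rw [adjOp, Finset.card_filter]
    push_cast
    exact Finset.sum_congr rfl fun z _ => by
      by_cases h : (johnsonGraph Ω D).Adj y z <;> simp [h, vee]
  rw [step1, ← Nat.cast_mul]
  norm_cast
  rw [← Finset.card_product]
  symm
  -- bijection between pairs (u, v) and neighbours z ⊇ α of y
  refine Finset.card_bij
    (fun p hp => (⟨insert p.2 (Y.erase p.1), ?_⟩ : {s : Finset Ω // s.card = D}))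
    ?_ ?_ ?_
  · -- cardinality of the image set
    rcases Finset.mem_product.1 hp with ⟨hu, hv⟩
    have hu' : p.1 ∈ Y := (Finset.mem_sdiff.1 hu).1
    have hv' : p.2 ∉ Y := ((hVmem p.2).1 hv).1
    have hvne : p.2 ∉ Y.erase p.1 := fun h => hv' (Finset.mem_of_mem_erase h)
    rw [Finset.card_insert_of_notMem hvne, Finset.card_erase_of_mem hu', hY]
    have hD1 : 1 ≤ D := hY ▸ Finset.card_pos.2 ⟨p.1, hu'⟩
    omega
  · -- membership in the target
    rintro ⟨u, v⟩ hp
    rcases Finset.mem_product.1 hp with ⟨hu, hv⟩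
    have hu1 : u ∈ Y := (Finset.mem_sdiff.1 hu).1
    have hu2 : u ∉ α := (Finset.mem_sdiff.1 hu).2
    have hv1 : v ∉ Y := ((hVmem v).1 hv).1
    have hv2 : α \ Y ⊆ {v} := ((hVmem v).1 hv).2
    simp only [Finset.mem_filter, Finset.mem_univ, true_and]
    constructor
    · constructor
      · -- z ≠ y
        intro h
        have h' : Y = insert v (Y.erase u) := congrArg Subtype.val h
        exact hv1 (by rw [h']; exact Finset.mem_insert_self v _)
      · -- intersection size
        show (Y ∩ insert v (Y.erase u)).card = D - 1
        rw [Finset.inter_comm, Finset.insert_inter_of_notMem hv1,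
          Finset.inter_eq_left.2 (Finset.erase_subset u Y),
          Finset.card_erase_of_mem hu1, hY]
    · -- α ⊆ z
      intro a ha
      by_cases hay : a ∈ Y
      · have : a ≠ u := fun h => hu2 (h ▸ ha)
        exact Finset.mem_insert_of_mem (Finset.mem_erase.2 ⟨this, hay⟩)
      · have : a ∈ ({v} : Finset Ω) := hv2 (Finset.mem_sdiff.2 ⟨ha, hay⟩)
        rw [Finset.mem_singleton] at this
        subst this
        exact Finset.mem_insert_self _ _
  · -- injectivity
    rintro ⟨u, v⟩ hp ⟨u', v'⟩ hp' heq
    rcases Finset.mem_product.1 hp with ⟨hu, hv⟩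
    rcases Finset.mem_product.1 hp' with ⟨hu', hv'⟩
    have hu1 : u ∈ Y := (Finset.mem_sdiff.1 hu).1
    have hv1 : v ∉ Y := ((hVmem v).1 hv).1
    have hu1' : u' ∈ Y := (Finset.mem_sdiff.1 hu').1
    have hv1' : v' ∉ Y := ((hVmem v').1 hv').1
    have hz : insert v (Y.erase u) = insert v' (Y.erase u') := congrArg Subtype.val heq
    have key : ∀ (a b : Ω), a ∈ Y → b ∉ Y →
        Y \ insert b (Y.erase a) = {a} ∧ insert b (Y.erase a) \ Y = {b} := by
      intro a b ha hb
      constructor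
      · ext w
        simp only [Finset.mem_sdiff, Finset.mem_insert, Finset.mem_erase,
          Finset.mem_singleton]
        constructor
        · rintro ⟨hwY, hw⟩
          push_neg at hw
          by_contra hne
          exact (hw.2 hne) hwY
        · rintro rfl
          refine ⟨ha, ?_⟩
          push_neg
          refine ⟨fun h => hb (h ▸ ha), fun h => absurd rfl h⟩
      · ext w
        simp only [Finset.mem_sdiff, Finset.mem_insert, Finset.mem_erase,
          Finset.mem_singleton]
        constructor
        · rintro ⟨hw, hwY⟩
          rcases hw with rfl | ⟨-, hw⟩
          · rfl
          · exact absurd hw hwY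
        · rintro rfl
          exact ⟨Or.inl rfl, hb⟩
      
    have h1 := (key u v hu1 hv1).1
    have h2 := (key u v hu1 hv1).2
    have h1' := (key u' v' hu1' hv1').1
    have h2' := (key u' v' hu1' hv1').2
    rw [hz] at h1 h2
    have : ({u} : Finset Ω) = {u'} := h1.symm.trans h1'
    have hu'' : u = u' := Finset.singleton_injective this
    have : ({v} : Finset Ω) = {v'} := h2.symm.trans h2'
    have hv'' : v = v' := Finset.singleton_injective this
    simp [hu'', hv'']
  · -- surjectivity
    rintro z hz
    simp only [Finset.mem_filter, Finset.mem_univ, true_and] at hz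
    obtain ⟨⟨hne, hcard⟩, hαz⟩ := hz
    set Z := (z : Finset Ω) with hZdef
    have hZ : Z.card = D := z.2
    have hZY : Z ≠ Y := fun h => hne (Subtype.ext h).symm
    have hD1 : 1 ≤ D := by
      rcases Nat.eq_zero_or_pos D with h | h
      · exact absurd ((Finset.card_eq_zero.1 (h ▸ hZ)).trans
          (Finset.card_eq_zero.1 (h ▸ hY)).symm) hZY
      · exact h
    have hcard' : (Y ∩ Z).card = D - 1 := hcard
    have hYZ1 : (Y \ Z).card = 1 := by
      have := Finset.card_sdiff_add_card_inter Y Z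
      omega
    have hZY1 : (Z \ Y).card = 1 := by
      have := Finset.card_sdiff_add_card_inter Z Y
      rw [Finset.inter_comm] at hcard'
      omega
    obtain ⟨u, hu⟩ := Finset.card_eq_one.1 hYZ1
    obtain ⟨v, hv⟩ := Finset.card_eq_one.1 hZY1
    have huY : u ∈ Y := (Finset.mem_sdiff.1 (hu ▸ Finset.mem_singleton_self u)).1
    have huZ : u ∉ Z := (Finset.mem_sdiff.1 (hu ▸ Finset.mem_singleton_self u)).2
    have hvZ : v ∈ Z := (Finset.mem_sdiff.1 (hv ▸ Finset.mem_singleton_self v)).1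
    have hvY : v ∉ Y := (Finset.mem_sdiff.1 (hv ▸ Finset.mem_singleton_self v)).2
    refine ⟨(u, v), ?_, ?_⟩
    · refine Finset.mem_product.2 ⟨?_, ?_⟩
      · exact Finset.mem_sdiff.2 ⟨huY, fun h => huZ (hαz h)⟩
      · refine (hVmem v).2 ⟨hvY, ?_⟩
        intro a ha
        rcases Finset.mem_sdiff.1 ha with ⟨ha1, ha2⟩
        have : a ∈ Z \ Y := Finset.mem_sdiff.2 ⟨hαz ha1, ha2⟩
        rw [hv] at this
        exact this
    · apply Subtype.ext
      show insert v (Y.erase u) = Z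
      ext w
      simp only [Finset.mem_insert, Finset.mem_erase]
      constructor
      · rintro (rfl | ⟨hwu, hwY⟩)
        · exact hvZ
        · by_contra hwZ
          have : w ∈ Y \ Z := Finset.mem_sdiff.2 ⟨hwY, hwZ⟩
          rw [hu, Finset.mem_singleton] at this
          exact hwu this
      · intro hwZ
        by_cases hwY : w ∈ Y
        · exact Or.inr ⟨fun h => huZ (h ▸ hwZ), hwY⟩
        · have : w ∈ Z \ Y := Finset.mem_sdiff.2 ⟨hwZ, hwY⟩
          rw [hv, Finset.mem_singleton] at this
          exact Or.inl this

/-- Evaluating the sum of `β^∨` over `β ⊆ α`, `|β| = n`, at a vertex `y`. -/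
lemma powersetCard_vee_apply (D n : ℕ) (α : Finset Ω) (y : {s : Finset Ω // s.card = D}) :
    (∑ β ∈ α.powersetCard n, vee Ω D β) y =
      (((α ∩ (y : Finset Ω)).card.choose n : ℕ) : ℂ) := by
  classical
  rw [Finset.sum_apply]
  simp only [vee]
  rw [Finset.sum_boole]
  norm_cast
  have : (α.powersetCard n).filter (fun β => β ⊆ (y : Finset Ω)) =
      (α ∩ (y : Finset Ω)).powersetCard n := by
    ext β
    simp only [Finset.mem_filter, Finset.mem_powersetCard, Finset.subset_inter_iff]
    tauto
  rw [this, Finset.card_powersetCard]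

/-- The key eigen-identity: `A α^∨ = θ_{n+1} α^∨ + (D-n) Σ_{β⊂α, |β|=n} β^∨`. -/
lemma adjOp_vee (N D n : ℕ) (hΩ : Fintype.card Ω = N) (hn : n + 1 ≤ D) (hDN : D ≤ N)
    (α : Finset Ω) (hcard : α.card = n + 1) :
    adjOp Ω D (vee Ω D α) = theta N D (n + 1) • vee Ω D α +
      ((D : ℂ) - (n : ℂ)) • ∑ β ∈ α.powersetCard n, vee Ω D β := by
  classical
  funext y
  rw [adjOp_vee_apply]
  simp only [Pi.add_apply, Pi.smul_apply, smul_eq_mul]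
  rw [powersetCard_vee_apply]
  set Y := (y : Finset Ω) with hYdef
  have hY : Y.card = D := y.2
  by_cases hsub : α ⊆ Y
  · have h1 : (Y \ α).card = D - (n + 1) := by
      rw [Finset.card_sdiff_of_subset hsub, hY, hcard]
    have h2 : (Finset.univ.filter fun v : Ω => v ∉ Y ∧ α \ Y ⊆ {v}) = Yᶜ := by
      ext v
      simp [Finset.sdiff_eq_empty_iff_subset.2 hsub]
    have h3 : α ∩ Y = α := Finset.inter_eq_left.2 hsub
    rw [h1, h2, h3, hcard, vee, if_pos hsub, Finset.card_compl, hY, hΩ,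
      Nat.choose_succ_self_right, Nat.cast_sub hn, Nat.cast_sub hDN, theta]
    push_cast
    ring
  · have hv0 : vee Ω D α y = 0 := by rw [vee, if_neg hsub]
    have hk1 : 1 ≤ (α \ Y).card := by
      by_contra h
      push_neg at h
      rw [Nat.lt_one_iff, Finset.card_eq_zero, Finset.sdiff_eq_empty_iff_subset] at h
      exact hsub h
    have hsplit : (α ∩ Y).card + (α \ Y).card = n + 1 := by
      have := Finset.card_sdiff_add_card_inter α Y
      omega
    have hYα : (Y \ α).card + (α ∩ Y).card = D := by
      have := Finset.card_sdiff_add_card_inter Y α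
      rw [Finset.inter_comm] at this
      omega
    rcases eq_or_lt_of_le hk1 with hk | hk
    · -- exactly one element of α missing from y
      obtain ⟨w, hw⟩ := Finset.card_eq_one.1 hk.symm
      have hwα : w ∈ α := (Finset.mem_sdiff.1 (hw ▸ Finset.mem_singleton_self w)).1
      have hwY : w ∉ Y := (Finset.mem_sdiff.1 (hw ▸ Finset.mem_singleton_self w)).2
      have hV : (Finset.univ.filter fun v : Ω => v ∉ Y ∧ α \ Y ⊆ {v}) = {w} := by
        ext v
        simp only [Finset.mem_filter, Finset.mem_univ, true_and, hw,
          Finset.singleton_subset_iff, Finset.mem_singleton]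
        constructor
        · rintro ⟨-, h⟩; exact h.symm
        · rintro rfl; exact ⟨hwY, rfl⟩
      have hint : (α ∩ Y).card = n := by omega
      have hYα' : (Y \ α).card = D - n := by omega
      rw [hv0, hV, hint, hYα', Finset.card_singleton, Nat.choose_self,
        Nat.cast_sub (by omega : n ≤ D)]
      push_cast
      ring
    · -- at least two elements of α missing from y
      have hV : (Finset.univ.filter fun v : Ω => v ∉ Y ∧ α \ Y ⊆ {v}) = ∅ := by
        ext v
        simp only [Finset.mem_filter, Finset.mem_univ, true_and,
          Finset.notMem_empty, iff_false, not_and]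
        intro _ h
        have := Finset.card_le_card h
        simp only [Finset.card_singleton] at this
        omega
      have hchoose : (α ∩ Y).card.choose n = 0 :=
        Nat.choose_eq_zero_of_lt (by omega)
      rw [hv0, hV, hchoose, Finset.card_empty]
      push_cast
      ring

/-- Base case: the all-ones vector is a `θ₀`-eigenvector. -/
lemma adjOp_vee_empty (N D : ℕ) (hΩ : Fintype.card Ω = N) (hDN : D ≤ N) :
    adjOp Ω D (vee Ω D (∅ : Finset Ω)) = theta N D 0 • vee Ω D (∅ : Finset Ω) := by
  classical
  funext y
  rw [adjOp_vee_apply]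
  have h2 : (Finset.univ.filter fun v : Ω =>
      v ∉ (y : Finset Ω) ∧ (∅ : Finset Ω) \ (y : Finset Ω) ⊆ {v}) = (y : Finset Ω)ᶜ := by
    ext v
    simp
  rw [h2, Finset.sdiff_empty, y.2, Finset.card_compl, y.2, hΩ]
  simp only [Pi.smul_apply, vee, Finset.empty_subset, if_pos, smul_eq_mul, mul_one, theta]
  rw [Nat.cast_sub hDN]
  push_cast
  ring

end Aux

theorem stmt15 (N D : ℕ) (hND : N > 2 * D)
    (Ω : Type*) [Fintype Ω] [DecidableEq Ω] (hΩ : Fintype.card Ω = N)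
    (x : {s : Finset Ω // s.card = D}) (α : Finset Ω) (hα : α ⊆ (x : Finset Ω)) :
    annihProd Ω N D (α.card + 1) (vee Ω D α) = 0 := by
  classical
  have hDN : D ≤ N := by omega
  have hαD : α.card ≤ D := le_trans (Finset.card_le_card hα) (le_of_eq x.2)
  clear hα
  have key : ∀ n : ℕ, ∀ α : Finset Ω, α.card = n → n ≤ D →
      annihProd Ω N D (n + 1) (vee Ω D α) = 0 := by
    intro n
    induction n with
    | zero =>
      intro α hc _
      rw [Finset.card_eq_zero] at hc
      subst hc
      show annihProd Ω N D 0
        (adjOp Ω D (vee Ω D (∅ : Finset Ω)) - theta N D 0 • vee Ω D (∅ : Finset Ω)) = 0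
      rw [adjOp_vee_empty N D hΩ hDN, sub_self]
      rfl
    | succ n ih =>
      intro α hc hle
      show annihProd Ω N D (n + 1)
        (adjOp Ω D (vee Ω D α) - theta N D (n + 1) • vee Ω D α) = 0
      rw [adjOp_vee N D n hΩ hle hDN α hc]
      have heq : theta N D (n + 1) • vee Ω D α +
          ((D : ℂ) - (n : ℂ)) • ∑ β ∈ α.powersetCard n, vee Ω D β -
          theta N D (n + 1) • vee Ω D α =
          ((D : ℂ) - (n : ℂ)) • ∑ β ∈ α.powersetCard n, vee Ω D β := by
        abel
      rw [heq, annihProd_smul, annihProd_sum]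
      have : ∀ β ∈ α.powersetCard n, annihProd Ω N D (n + 1) (vee Ω D β) = 0 := by
        intro β hβ
        rcases Finset.mem_powersetCard.1 hβ with ⟨-, hβc⟩
        exact ih β hβc (by omega)
      rw [Finset.sum_congr rfl this]
      simp
  exact key α.card α rfl hαD
end
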